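/- Let Q be a finite quiver, k an algebraically closed field, α a dimension vector, and φ : ⊕_v O(v)^{a(v)} → ⊕_v O(v)^{b(v)} a morphism in the additive category add(Q) such that Σ_v a(v)α(v) = Σ_v b(v)α(v). Then the function P_{φ,α} : R(Q,α) → k defined by P_{φ,α}(p) = det R_p(φ) is a polynomial function on R(Q,α) that is a semi-invariant for the action of GL(α): there exists a character ψ of GL(α) such that P_{φ,α}(g · p) = ψ(g) P_{φ,α}(p) for all g ∈ GL(α), p ∈ R(Q,α). -/

import Mathlib

open Matrix BigOperators


/-- Paths in the quiver with arrow set `A`, vertex set `V`, and source/target maps `src`, `tgt`. -/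
inductive QPath {V A : Type} (src tgt : A → V) : V → V → Type where
  | nil (v : V) : QPath src tgt v v
  | cons {u w : V} (p : QPath src tgt u w) (a : A) (h : src a = w) : QPath src tgt u (tgt a)

namespace QPath
variable {V A : Type} {src tgt : A → V}

/-- Concatenation of paths. -/
def comp {u v w : V} (p : QPath src tgt u v) : QPath src tgt v w → QPath src tgt u w
  | .nil _ => p
  | .cons q a h => .cons (p.comp q) a h

/-- Length of a path. -/
def length {u v : V} : QPath src tgt u v → ℕ
  | .nil _ => 0
  | .cons p _ _ => p.length + 1

end QPath

/-- The space `R(Q,α)` of representations of dimension vector `α`. -/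
abbrev RepSpace (k : Type) [Field k] {V A : Type} (src tgt : A → V) (α : V → ℕ) : Type :=
  ∀ a : A, Matrix (Fin (α (src a))) (Fin (α (tgt a))) k

variable {k V A : Type} [Field k]

/-- The matrix obtained by evaluating the representation corresponding to `p ∈ R(Q,α)`
on a path. -/
def evalPath {src tgt : A → V} {α : V → ℕ} (p : RepSpace k src tgt α) :
    ∀ {u v : V}, QPath src tgt u v → Matrix (Fin (α u)) (Fin (α v)) k
  | _, _, .nil v => 1
  | _, _, .cons q a h => evalPath p q * (p a).submatrix (Fin.cast (congrArg α h).symm) id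

/-- The base-change action of `GL(α) = ∏ᵥ GL_{α(v)}(k)` on `R(Q,α)`:
`(g·p)(a) = g(src a)⁻¹ ⬝ p(a) ⬝ g(tgt a)`. -/
def glAct {src tgt : A → V} {α : V → ℕ} (g : ∀ v, GL (Fin (α v)) k)
    (p : RepSpace k src tgt α) : RepSpace k src tgt α :=
  fun a => (↑((g (src a))⁻¹) : Matrix (Fin (α (src a))) (Fin (α (src a))) k) * p a *
    (↑(g (tgt a)) : Matrix (Fin (α (tgt a))) (Fin (α (tgt a))) k)

/-- A map `φ : ⊕ᵢ O(vi i) → ⊕ⱼ O(vj j)` in the additive category `add(Q)`: each entry is a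
formal `k`-linear combination of paths from `vi i` to `vj j`. -/
structure AddMap (k : Type) [Field k] {V A : Type} (src tgt : A → V) : Type 1 where
  ι : Type
  κ : Type
  [fι : Fintype ι]
  [fκ : Fintype κ]
  [dι : DecidableEq ι]
  [dκ : DecidableEq κ]
  vi : ι → V
  vj : κ → V
  entry : ∀ i j, QPath src tgt (vi i) (vj j) →₀ k

attribute [instance] AddMap.fι AddMap.fκ AddMap.dι AddMap.dκ

namespace AddMap
variable {src tgt : A → V}

/-- Row index set of the matrix `R_p(φ)`. -/
abbrev rows (φ : AddMap k src tgt) (α : V → ℕ) : Type := Σ i : φ.ι, Fin (α (φ.vi i))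

/-- Column index set of the matrix `R_p(φ)`. -/
abbrev cols (φ : AddMap k src tgt) (α : V → ℕ) : Type := Σ j : φ.κ, Fin (α (φ.vj j))

/-- The block matrix `R_p(φ)` induced by `φ` on the representation corresponding to `p`. -/
def mat (φ : AddMap k src tgt) (α : V → ℕ) (p : RepSpace k src tgt α) :
    Matrix (φ.rows α) (φ.cols α) k :=
  fun r c => ((φ.entry r.1 c.1).sum fun q coef => coef • evalPath p q) r.2 c.2

end AddMap

/-- The determinantal semi-invariant `P_{φ,α}(p) = det R_p(φ)`, where the square shape is
witnessed by the bijection `e` between columns and rows. -/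
def detP {src tgt : A → V} (φ : AddMap k src tgt) (α : V → ℕ)
    (e : φ.cols α ≃ φ.rows α) (p : RepSpace k src tgt α) : k :=
  ((φ.mat α p).submatrix e id).det

/-- A function on `R(Q,α)` is polynomial if it is given by a polynomial in the matrix entries. -/
def IsPolyFun {src tgt : A → V} {α : V → ℕ} (F : RepSpace k src tgt α → k) : Prop :=
  ∃ P : MvPolynomial (Σ a : A, Fin (α (src a)) × Fin (α (tgt a))) k,
    ∀ p, MvPolynomial.eval (fun x => p x.1 x.2.1 x.2.2) P = F p

/-- A function on `R(Q,α)` is a semi-invariant if it transforms under `GL(α)` via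
a character (group homomorphism to `kˣ`). -/
def IsSemiInv {src tgt : A → V} {α : V → ℕ} (F : RepSpace k src tgt α → k) : Prop :=
  ∃ ψ : (∀ v, GL (Fin (α v)) k) →* kˣ, ∀ g p, F (glAct g p) = (ψ g : k) * F p

/-! `R_p(φ)` is the specialisation at `p` of a generic matrix whose entries are polynomials in the
coordinates of `R(Q,α)`, and specialisation commutes with `det`; hence `P_{φ,α}` is polynomial.

Base change by `g` turns the block `R_p(φ_{ij})` into `g(vi i)⁻¹ R_p(φ_{ij}) g(vj j)`, so
`R_{g·p}(φ) = D(g)⁻¹ R_p(φ) E(g)` with `D`, `E` block-diagonal homomorphisms `GL(α) → GL`, and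
`P_{φ,α}(g·p) = det D(g)⁻¹ · det E(g) · P_{φ,α}(p)`. The factor is a character of `GL(α)`, equal to
`∏ᵥ det(g v)^(b(v) - a(v))`. -/

namespace Matrix

theorem ext_of_submatrix_sigmaMk {R ι κ : Type*} {m : ι → Type*} {n : κ → Type*}
    {M N : Matrix (Σ i, m i) (Σ j, n j) R}
    (h : ∀ i j, M.submatrix (Sigma.mk i) (Sigma.mk j) = N.submatrix (Sigma.mk i) (Sigma.mk j)) :
    M = N :=
  ext fun ⟨i, x⟩ ⟨j, y⟩ => congrFun₂ (h i j) x y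

section BlockDiagonal

variable {R ι : Type*} [Semiring R] [Fintype ι] [DecidableEq ι]

theorem submatrix_sigmaMk_blockDiagonal'_mul {m : ι → Type*} [∀ i, Fintype (m i)]
    {n l : Type*} (d : ∀ i, Matrix (m i) (m i) R) (M : Matrix (Σ i, m i) n R) (i : ι)
    (f : l → n) :
    (blockDiagonal' d * M).submatrix (Sigma.mk i) f = d i * M.submatrix (Sigma.mk i) f := by
  ext x c
  simp only [submatrix_apply, mul_apply, Fintype.sum_sigma]
  rw [Fintype.sum_eq_single i fun i' hi' => Finset.sum_eq_zero fun _ _ => by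
    rw [blockDiagonal'_apply_ne _ _ _ hi'.symm, zero_mul]]
  simp

theorem submatrix_mul_blockDiagonal'_sigmaMk {n : ι → Type*} [∀ i, Fintype (n i)]
    {m l : Type*} (M : Matrix m (Σ j, n j) R) (d : ∀ j, Matrix (n j) (n j) R) (j : ι)
    (f : l → m) :
    (M * blockDiagonal' d).submatrix f (Sigma.mk j) = M.submatrix f (Sigma.mk j) * d j := by
  ext r y
  simp only [submatrix_apply, mul_apply, Fintype.sum_sigma]
  rw [Fintype.sum_eq_single j fun j' hj' => Finset.sum_eq_zero fun _ _ => by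
    rw [blockDiagonal'_apply_ne _ _ _ hj', mul_zero]]
  simp

end BlockDiagonal

theorem det_submatrix_mul_mul {R m n : Type*} [CommRing R] [Fintype m] [DecidableEq m]
    [Fintype n] [DecidableEq n] (e : n ≃ m) (P : Matrix m m R) (M : Matrix m n R)
    (Q : Matrix n n R) :
    ((P * M * Q).submatrix e id).det = P.det * (M.submatrix e id).det * Q.det := by
  have hM : (M * Q).submatrix e id = M.submatrix e id * Q := by
    rw [submatrix_mul M Q e id id Function.bijective_id, submatrix_id_id]
  rw [Matrix.mul_assoc, ← submatrix_mul_equiv P (M * Q) e e id, hM, det_mul, det_mul,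
    det_submatrix_equiv_self, mul_assoc]

end Matrix

section Generic

variable {src tgt : A → V} {α : V → ℕ}

abbrev RepCoord (src tgt : A → V) (α : V → ℕ) : Type :=
  Σ a : A, Fin (α (src a)) × Fin (α (tgt a))

def RepSpace.coords (p : RepSpace k src tgt α) : RepCoord src tgt α → k :=
  fun x => p x.1 x.2.1 x.2.2

variable (k) in
noncomputable def genericRep (a : A) :
    Matrix (Fin (α (src a))) (Fin (α (tgt a))) (MvPolynomial (RepCoord src tgt α) k) :=
  of fun i j => MvPolynomial.X ⟨a, (i, j)⟩

variable (k) in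
noncomputable def genericPath : ∀ {u v : V}, QPath src tgt u v →
    Matrix (Fin (α u)) (Fin (α v)) (MvPolynomial (RepCoord src tgt α) k)
  | _, _, .nil _ => 1
  | _, _, .cons q a h =>
      -- without the ascription, `*` elaborates as `CStarMatrix` multiplication
      genericPath q * ((genericRep k a).submatrix (Fin.cast (congrArg α h).symm) id :
        Matrix (Fin (α _)) (Fin (α (tgt a))) _)

theorem map_genericPath (p : RepSpace k src tgt α) {u v : V} (q : QPath src tgt u v) :
    (genericPath k q).map (MvPolynomial.eval p.coords) = evalPath p q := by
  induction q with
  | nil => rw [genericPath, evalPath]; exact Matrix.map_one _ (map_zero _) (map_one _)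
  | cons q a h ih =>
      rw [genericPath, evalPath, Matrix.map_mul, ih, ← Matrix.submatrix_map]
      congr 2
      ext i j
      simp [genericRep, RepSpace.coords]

noncomputable def AddMap.genericMat (φ : AddMap k src tgt) (α : V → ℕ) :
    Matrix (φ.rows α) (φ.cols α) (MvPolynomial (RepCoord src tgt α) k) :=
  fun r c => ((φ.entry r.1 c.1).sum fun q coef => coef • genericPath k q) r.2 c.2

theorem AddMap.map_genericMat (φ : AddMap k src tgt) (p : RepSpace k src tgt α) :
    (φ.genericMat α).map (MvPolynomial.eval p.coords) = φ.mat α p := by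
  ext r c
  simp [AddMap.genericMat, AddMap.mat, Finsupp.sum, Matrix.sum_apply, ← map_genericPath p]

theorem isPolyFun_detP (φ : AddMap k src tgt) (e : φ.cols α ≃ φ.rows α) :
    IsPolyFun (detP φ α e) :=
  ⟨((φ.genericMat α).submatrix e id).det, fun p => by
    rw [detP, ← φ.map_genericMat p, Matrix.submatrix_map]
    exact (MvPolynomial.eval p.coords).map_det _⟩

end Generic

section SemiInvariance

variable {src tgt : A → V} {α : V → ℕ}

theorem evalPath_glAct (g : ∀ v, GL (Fin (α v)) k) (p : RepSpace k src tgt α) {u v : V}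
    (q : QPath src tgt u v) :
    evalPath (glAct g p) q = (↑(g u)⁻¹ : Matrix (Fin (α u)) (Fin (α u)) k) * evalPath p q *
      (↑(g v) : Matrix (Fin (α v)) (Fin (α v)) k) := by
  induction q with
  | nil => rw [evalPath, evalPath, Matrix.mul_one, ← Units.val_mul, inv_mul_cancel, Units.val_one]
  | cons q a h ih =>
      subst h
      simp only [evalPath, ih, glAct, Fin.cast_refl, Matrix.submatrix_id_id, Matrix.mul_assoc]
      rw [← Matrix.mul_assoc (↑(g (src a)) : Matrix (Fin (α (src a))) (Fin (α (src a))) k),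
        ← Units.val_mul, mul_inv_cancel, Units.val_one, Matrix.one_mul]

theorem AddMap.submatrix_mat_glAct (φ : AddMap k src tgt) (g : ∀ v, GL (Fin (α v)) k)
    (p : RepSpace k src tgt α) (i : φ.ι) (j : φ.κ) :
    (φ.mat α (glAct g p)).submatrix (Sigma.mk i) (Sigma.mk j) =
      (↑(g (φ.vi i))⁻¹ : Matrix (Fin (α (φ.vi i))) (Fin (α (φ.vi i))) k) *
        (φ.mat α p).submatrix (Sigma.mk i) (Sigma.mk j) *
        (↑(g (φ.vj j)) : Matrix (Fin (α (φ.vj j))) (Fin (α (φ.vj j))) k) := by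
  change (φ.entry i j).sum (fun q coef => coef • evalPath (glAct g p) q) =
    _ * (φ.entry i j).sum (fun q coef => coef • evalPath p q) * _
  simp [Finsupp.sum, Matrix.mul_sum, Matrix.sum_mul, evalPath_glAct]

variable (α) in
noncomputable def blockDiagGL {ι : Type*} [Fintype ι] [DecidableEq ι] (w : ι → V) :
    (∀ v, GL (Fin (α v)) k) →* GL (Σ i, Fin (α (w i))) k :=
  (Units.map (blockDiagonal'RingHom (fun i => Fin (α (w i))) k).toMonoidHom).comp <|
    MulEquiv.piUnits.symm.toMonoidHom.comp <| MonoidHom.pi fun i => Pi.evalMonoidHom _ (w i)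

theorem coe_blockDiagGL {ι : Type*} [Fintype ι] [DecidableEq ι] (w : ι → V)
    (g : ∀ v, GL (Fin (α v)) k) :
    (↑(blockDiagGL α w g) : Matrix (Σ i, Fin (α (w i))) (Σ i, Fin (α (w i))) k) =
      blockDiagonal' fun i => (↑(g (w i)) : Matrix (Fin (α (w i))) (Fin (α (w i))) k) :=
  rfl

theorem AddMap.mat_glAct (φ : AddMap k src tgt) (g : ∀ v, GL (Fin (α v)) k)
    (p : RepSpace k src tgt α) :
    φ.mat α (glAct g p) =
      (↑(blockDiagGL α φ.vi g⁻¹) : Matrix (φ.rows α) (φ.rows α) k) * φ.mat α p *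
        (↑(blockDiagGL α φ.vj g) : Matrix (φ.cols α) (φ.cols α) k) := by
  refine Matrix.ext_of_submatrix_sigmaMk fun i j => ?_
  rw [φ.submatrix_mat_glAct, coe_blockDiagGL, coe_blockDiagGL,
    Matrix.submatrix_mul_blockDiagonal'_sigmaMk, Matrix.submatrix_sigmaMk_blockDiagonal'_mul]
  rfl

noncomputable def AddMap.detChar (φ : AddMap k src tgt) (α : V → ℕ) :
    (∀ v, GL (Fin (α v)) k) →* kˣ :=
  (GeneralLinearGroup.det.comp (blockDiagGL α φ.vi))⁻¹ *
    GeneralLinearGroup.det.comp (blockDiagGL α φ.vj)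

theorem detP_glAct (φ : AddMap k src tgt) (e : φ.cols α ≃ φ.rows α)
    (g : ∀ v, GL (Fin (α v)) k) (p : RepSpace k src tgt α) :
    detP φ α e (glAct g p) = φ.detChar α g * detP φ α e p := by
  rw [detP, detP, φ.mat_glAct, Matrix.det_submatrix_mul_mul, map_inv, mul_right_comm]
  rfl

end SemiInvariance

theorem detP_isPolyFun_and_isSemiInv_general
    (src tgt : A → V) (α : V → ℕ) (φ : AddMap k src tgt) (e : φ.cols α ≃ φ.rows α) :
    IsPolyFun (detP φ α e) ∧ IsSemiInv (detP φ α e) :=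
  ⟨isPolyFun_detP φ e, φ.detChar α, detP_glAct φ e⟩

/-- For a map `φ` in `add(Q)` with `Σᵥ a(v)α(v) = Σᵥ b(v)α(v)` (witnessed by the
bijection `e` between column and row indices), the function `P_{φ,α}(p) = det R_p(φ)` is a
polynomial function on `R(Q,α)` and a semi-invariant for the base-change action of `GL(α)`:
there is a character `ψ` of `GL(α)` with `P_{φ,α}(g·p) = ψ(g)·P_{φ,α}(p)` for all `g`, `p`. -/
theorem detP_isPolyFun_and_isSemiInv [Fintype V] [Fintype A] [IsAlgClosed k]
    (src tgt : A → V) (α : V → ℕ) (φ : AddMap k src tgt) (e : φ.cols α ≃ φ.rows α) :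
    IsPolyFun (detP φ α e) ∧ IsSemiInv (detP φ α e) :=
  detP_isPolyFun_and_isSemiInv_general src tgt α φ e
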